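/- Let F be the Faà di Bruno Hopf algebra over ℝ (polynomial algebra on a_2, a_3, ... with the Faà di Bruno coproduct, a_1 = 1). The map sending an algebra character f : F → ℝ to the formal power series f(t) = t + ∑_{n≥2} ⟨f, a_n⟩ t^n/n! is a group anti-isomorphism from the convolution group of characters onto the group (under composition) of formal exponential power series with f_1 = 1: that is, ⟨f * g, a_n⟩ = n![t^n](g ∘ f). -/

import Mathlib

open Finset TensorProduct

/-- Partition-type vectors `λ ∈ ℕ^n` with `∑ i·λ_i = n` and `∑ λ_i = k`. -/
def bellIndex (n k : ℕ) : Finset (Fin n → Fin (n + 1)) :=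
  univ.filter fun l => (∑ i, (i.1 + 1) * (l i).1 = n) ∧ (∑ i, (l i).1 = k)

/-- The coefficient `n! / (λ_1!⋯λ_n! (1!)^{λ_1}⋯(n!)^{λ_n})`. -/
def bellCoeff (n : ℕ) (l : Fin n → Fin (n + 1)) : ℚ :=
  (n.factorial : ℚ) /
    ((∏ i, ((l i).1.factorial * ((i.1 + 1).factorial) ^ (l i).1) : ℕ) : ℚ)

/-- The Faà di Bruno Hopf algebra `ℝ[a_2, a_3, …]` as a polynomial algebra;
the variable `X n` represents the generator `a_n` (only `n ≥ 2` are used). -/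
abbrev FdB : Type := MvPolynomial ℕ ℝ

/-- The generators: `a_1 = 1` and `a_n = X n` for `n ≥ 2` (also `a_0 := 1`, unused). -/
noncomputable def A (n : ℕ) : FdB := if n ≤ 1 then 1 else MvPolynomial.X n

/-- The Faà di Bruno coproduct on the generator `a_n`:
`Δa_n = ∑_{k=1}^n ∑_λ (n!/(λ_1!⋯λ_n!(1!)^{λ_1}⋯(n!)^{λ_n})) a_1^{λ_1}⋯a_n^{λ_n} ⊗ a_k`
with `a_1 = 1`; equivalently `Δa_n = ∑_{k=1}^n B_{n,k}(a_1,…,a_{n+1−k}) ⊗ a_k`. -/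
noncomputable def coprodGen (n : ℕ) : FdB ⊗[ℝ] FdB :=
  ∑ k ∈ Icc 1 n, ∑ l ∈ bellIndex n k,
    ((bellCoeff n l : ℚ) : ℝ) • ((∏ i, A (i.1 + 1) ^ (l i).1) ⊗ₜ[ℝ] A k)

/-- The Faà di Bruno coproduct, as the algebra morphism with `Δ(a_n) = coprodGen n`. -/
noncomputable def Δ : FdB →ₐ[ℝ] FdB ⊗[ℝ] FdB := MvPolynomial.aeval coprodGen

/-- Convolution of two characters, `(f*g)(a) = (m ∘ (f⊗g) ∘ Δ)(a)`. -/
noncomputable def conv (f g : FdB →ₐ[ℝ] ℝ) : FdB →ₗ[ℝ] ℝ :=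
  LinearMap.mul' ℝ ℝ ∘ₗ TensorProduct.map f.toLinearMap g.toLinearMap ∘ₗ Δ.toLinearMap

/-- The exponential power series `t + ∑_{n≥2} ⟨f, a_n⟩ tⁿ/n!` attached to a character `f`. -/
noncomputable def charSeries (f : FdB →ₐ[ℝ] ℝ) : PowerSeries ℝ :=
  PowerSeries.mk fun n => if n = 0 then 0 else f (A n) / (n.factorial : ℝ)

/-- Formal composition `p ∘ q` of power series with zero constant term of `q`. -/
noncomputable def pcomp (p q : PowerSeries ℝ) : PowerSeries ℝ :=
  PowerSeries.mk fun n =>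
    ∑ k ∈ range (n + 1), PowerSeries.coeff k p * PowerSeries.coeff n (q ^ k)

/-!
Pairing `Δ aₙ` with `f ⊗ g` gives `∑ₖ B_{n,k}(f(a₁), f(a₂), …) · g(aₖ)`. By the exponential
formula, `B_{n,k}(x) = n!/k! · [tⁿ] (∑_{m ≥ 1} xₘ tᵐ/m!)ᵏ`, which is the multinomial expansion of
the degree-`n` truncation of that series; weighting by the coefficients `g(aₖ)/k!` of the outer
series turns the sum over `k` into `n! · [tⁿ]` of the composite.
-/

open PowerSeries

theorem PowerSeries.coeff_pow_congr {R : Type*} [CommSemiring R] {f g : R⟦X⟧} {n : ℕ}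
    (h : ∀ m ≤ n, coeff m f = coeff m g) (k : ℕ) : coeff n (f ^ k) = coeff n (g ^ k) := by
  have htrunc : trunc (n + 1) f = trunc (n + 1) g := by
    ext m
    simp only [coeff_trunc]
    split_ifs with hm
    exacts [h m (by omega), rfl]
  rw [← coeff_coe_trunc_of_lt n.lt_succ_self, ← trunc_trunc_pow, htrunc, trunc_trunc_pow,
    coeff_coe_trunc_of_lt n.lt_succ_self]

theorem PowerSeries.coeff_sum_C_mul_X_pow_pow {R ι : Type*} [CommSemiring R] [DecidableEq ι]
    (s : Finset ι) (c : ι → R) (d : ι → ℕ) (n k : ℕ) :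
    coeff n ((∑ i ∈ s, C (c i) * X ^ d i) ^ k) =
      ∑ l ∈ (piAntidiag s k).filter (fun l => ∑ i ∈ s, d i * l i = n),
        (Nat.multinomial s l : R) * ∏ i ∈ s, c i ^ l i := by
  rw [sum_pow_eq_sum_piAntidiag, map_sum, sum_filter]
  refine sum_congr rfl fun l _ => ?_
  simp only [mul_pow, ← map_pow, ← pow_mul, prod_mul_distrib, ← map_prod, prod_pow_eq_pow_sum]
  rw [← map_natCast (C (R := R)), ← mul_assoc, ← map_mul, coeff_C_mul_X_pow]
  simp only [mul_comm (d _)]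
  split_ifs <;> simp_all [eq_comm]

section ExponentialFormula

variable {K : Type*} [Field K]

noncomputable def partialBell (n k : ℕ) (x : ℕ → K) : K :=
  ∑ l ∈ bellIndex n k, (bellCoeff n l : K) * ∏ i, x (i.1 + 1) ^ (l i).1

noncomputable def expSeries (x : ℕ → K) : K⟦X⟧ :=
  PowerSeries.mk fun m => if m = 0 then 0 else x m / m.factorial

theorem coeff_expSeries (x : ℕ → K) {m : ℕ} (hm : m ≠ 0) :
    coeff m (expSeries x) = x m / m.factorial := by
  rw [expSeries, coeff_mk, if_neg hm]

theorem coeff_expSeries_eq_coeff_sum (x : ℕ → K) {n m : ℕ} (hm : m ≤ n) :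
    coeff m (expSeries x) =
      coeff m (∑ i : Fin n, C (x (i.1 + 1) / (i.1 + 1).factorial) * X ^ (i.1 + 1)) := by
  rw [expSeries, coeff_mk, map_sum]
  simp only [coeff_C_mul_X_pow]
  rcases m with _ | m
  · simp
  · rw [Fintype.sum_eq_single ⟨m, by omega⟩ (fun i hi => if_neg ?_)]
    · simp
    · exact fun h => hi (Fin.ext (by simp only; omega))

theorem sum_bellIndex_eq_sum_piAntidiag {M : Type*} [AddCommMonoid M] (n k : ℕ)
    (F : (Fin n → ℕ) → M) :
    ∑ l ∈ bellIndex n k, F (fun i => (l i).1) =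
      ∑ l ∈ (piAntidiag univ k).filter (fun l => ∑ i : Fin n, (i.1 + 1) * l i = n), F l := by
  refine sum_bij (fun l _ i => (l i).1) ?_ ?_ ?_ (fun _ _ => rfl)
  · intro l hl
    simp_all [bellIndex]
  · intro l _ l' _ h
    funext i
    exact Fin.ext (congrFun h i)
  · intro l hl
    simp only [mem_filter, mem_piAntidiag] at hl
    have hle (i : Fin n) : l i < n + 1 := by
      have := single_le_sum (f := fun i : Fin n => (i.1 + 1) * l i) (by simp) (mem_univ i)
      nlinarith
    exact ⟨fun i => ⟨l i, hle i⟩, by simp_all [bellIndex], rfl⟩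

theorem bellCoeff_mul_prod_eq_multinomial [CharZero K] {n k : ℕ} {l : Fin n → Fin (n + 1)}
    (hl : l ∈ bellIndex n k) (x : ℕ → K) :
    (k.factorial : K) * ((bellCoeff n l : K) * ∏ i, x (i.1 + 1) ^ (l i).1) =
      (n.factorial : K) * ((Nat.multinomial univ fun i => (l i).1 : K) *
        ∏ i, (x (i.1 + 1) / (i.1 + 1).factorial) ^ (l i).1) := by
  have hk : ∑ i, (l i).1 = k := (mem_filter.1 hl).2.2
  have hspec := Nat.multinomial_spec univ fun i => (l i).1
  rw [hk] at hspec
  rw [bellCoeff, ← hspec]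
  push_cast
  simp only [div_pow, prod_div_distrib, prod_mul_distrib]
  have : ∏ i : Fin n, ((l i).1.factorial : K) ≠ 0 :=
    prod_ne_zero_iff.2 fun i _ => Nat.cast_ne_zero.2 (Nat.factorial_ne_zero _)
  have : ∏ i : Fin n, (((i.1 + 1).factorial : K) ^ (l i).1) ≠ 0 :=
    prod_ne_zero_iff.2 fun i _ => pow_ne_zero _ (Nat.cast_ne_zero.2 (Nat.factorial_ne_zero _))
  field_simp

theorem coeff_expSeries_pow [CharZero K] (x : ℕ → K) (n k : ℕ) :
    (n.factorial : K) * coeff n (expSeries x ^ k) = k.factorial * partialBell n k x := by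
  rw [coeff_pow_congr (fun m hm => coeff_expSeries_eq_coeff_sum x hm), coeff_sum_C_mul_X_pow_pow,
    partialBell, ← sum_bellIndex_eq_sum_piAntidiag, mul_sum, mul_sum]
  exact sum_congr rfl fun l hl => (bellCoeff_mul_prod_eq_multinomial hl x).symm

end ExponentialFormula

theorem coeff_pcomp_of_coeff_zero_eq_zero {p : PowerSeries ℝ} (q : PowerSeries ℝ)
    (hp : coeff 0 p = 0) (n : ℕ) :
    coeff n (pcomp p q) = ∑ k ∈ Icc 1 n, coeff k p * coeff n (q ^ k) := by
  have hrange : range (n + 1) = insert 0 (Icc 1 n) := by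
    ext i
    simp only [mem_range, mem_insert, mem_Icc]
    omega
  rw [pcomp, coeff_mk, hrange, sum_insert (by simp), hp, zero_mul, zero_add]

theorem coprodGen_one : coprodGen 1 = 1 := by
  have hA1 : A 1 = 1 := if_pos le_rfl
  have hbell : bellIndex 1 1 = {fun _ => 1} := by decide
  have hcoeff : bellCoeff 1 (fun _ => 1) = 1 := by norm_num [bellCoeff]
  simp [coprodGen, hbell, hcoeff, hA1, Algebra.TensorProduct.one_def]

theorem Δ_A {n : ℕ} (hn : 1 ≤ n) : Δ (A n) = coprodGen n := by
  rcases hn.eq_or_lt with rfl | hn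
  · rw [coprodGen_one, A, if_pos le_rfl, map_one]
  · rw [A, if_neg (by omega), Δ, MvPolynomial.aeval_X]

theorem conv_A (f g : FdB →ₐ[ℝ] ℝ) {n : ℕ} (hn : 1 ≤ n) :
    conv f g (A n) = ∑ k ∈ Icc 1 n, partialBell n k (fun m => f (A m)) * g (A k) := by
  simp only [conv, LinearMap.comp_apply, AlgHom.toLinearMap_apply, Δ_A hn, coprodGen, map_sum,
    map_smul, TensorProduct.map_tmul, LinearMap.mul'_apply, partialBell, sum_mul, map_prod,
    map_pow, smul_eq_mul, mul_assoc]

/-- the map `f ↦ charSeries f` is an anti-isomorphism from the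
convolution group of characters of the Faà di Bruno Hopf algebra onto the group
of exponential power series with `f₁ = 1` under composition:
`⟨f * g, a_n⟩ = n!·[tⁿ]((charSeries g) ∘ (charSeries f))`. -/
theorem character_anti_iso (f g : FdB →ₐ[ℝ] ℝ) (n : ℕ) (hn : 1 ≤ n) :
    conv f g (A n) =
      (n.factorial : ℝ) *
        PowerSeries.coeff n (pcomp (charSeries g) (charSeries f)) := by
  set x : ℕ → ℝ := fun m => f (A m)
  have hf : charSeries f = expSeries x := rfl
  have hg : charSeries g = expSeries fun m => g (A m) := rfl
  rw [conv_A f g hn, hf, hg, coeff_pcomp_of_coeff_zero_eq_zero _ (by simp [expSeries]), mul_sum]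
  refine sum_congr rfl fun k hk => ?_
  rw [coeff_expSeries _ (by simp only [mem_Icc] at hk; omega)]
  have hbell := coeff_expSeries_pow x n k
  have hfac : (k.factorial : ℝ) ≠ 0 := Nat.cast_ne_zero.2 k.factorial_ne_zero
  field_simp
  linear_combination -g (A k) * hbell
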